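/- arXiv:2105.13826 — 2 statements merged into one kernel-verified Lean document; each statement's English description precedes it below -/
import Mathlib

section
/- Let p and q = p + 2 be odd primes, n = pq, and N = 5(4^n + 1)/((4^p + 1)(4^q + 1)). Then N is a positive integer and 4^n + 1 = N * ((4^p+1)/5) * ((4^q+1)/5) * 5. -/
/-!
Since `p` and `q` are odd, `4 ^ p + 1` and `4 ^ q + 1` both divide `4 ^ (p * q) + 1`, and both
are divisible by `5 = 4 + 1`. Their gcd is exactly `5`: it divides
`16 (4 ^ p + 1) - (4 ^ (p + 2) + 1) = 15`, and `4 ^ p + 1 ≡ 2 [MOD 3]`.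
Hence `(4 ^ p + 1) (4 ^ q + 1) = 5 · lcm ∣ 5 (4 ^ n + 1)`.
-/

theorem pow_add_one_dvd_pow_mul_add_one (a k : ℕ) {m : ℕ} (hm : Odd m) :
    a ^ k + 1 ∣ a ^ (k * m) + 1 := by
  simpa only [one_pow, pow_mul] using hm.nat_add_dvd_pow_add_pow (a ^ k) 1

theorem five_dvd_four_pow_add_one {m : ℕ} (hm : Odd m) : 5 ∣ 4 ^ m + 1 := by
  simpa only [pow_one, one_mul] using pow_add_one_dvd_pow_mul_add_one 4 1 hm

theorem not_three_dvd_four_pow_add_one (m : ℕ) : ¬ 3 ∣ 4 ^ m + 1 := by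
  rw [Nat.dvd_iff_mod_eq_zero, Nat.add_mod, Nat.pow_mod]
  norm_num

theorem gcd_four_pow_add_one_four_pow_add_two_add_one_dvd_fifteen (m : ℕ) :
    Nat.gcd (4 ^ m + 1) (4 ^ (m + 2) + 1) ∣ 15 := by
  have h : 16 * (4 ^ m + 1) = (4 ^ (m + 2) + 1) + 15 := by ring
  refine (Nat.dvd_add_right (Nat.gcd_dvd_right _ _)).mp ?_
  exact h ▸ Dvd.dvd.mul_left (Nat.gcd_dvd_left _ _) 16

theorem gcd_four_pow_add_one_four_pow_add_two_add_one {m : ℕ} (hm : Odd m) :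
    Nat.gcd (4 ^ m + 1) (4 ^ (m + 2) + 1) = 5 := by
  set d := Nat.gcd (4 ^ m + 1) (4 ^ (m + 2) + 1)
  have h15 : d ∣ 15 := gcd_four_pow_add_one_four_pow_add_two_add_one_dvd_fifteen m
  have h5 : 5 ∣ d := Nat.dvd_gcd (five_dvd_four_pow_add_one hm)
    (five_dvd_four_pow_add_one (hm.add_even even_two))
  have h3 : ¬ 3 ∣ d := fun h ↦
    not_three_dvd_four_pow_add_one m (h.trans (Nat.gcd_dvd_left _ _))
  have hd : d ≤ 15 := Nat.le_of_dvd (by norm_num) h15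
  interval_cases d <;> omega

theorem Nat.mul_dvd_gcd_mul_of_dvd {a b m : ℕ} (ha : a ∣ m) (hb : b ∣ m) :
    a * b ∣ Nat.gcd a b * m := by
  rw [← Nat.gcd_mul_lcm a b]
  exact Nat.mul_dvd_mul_left _ (Nat.lcm_dvd ha hb)

theorem Nat.eq_div_mul_div_mul_div_mul {a b c m : ℕ} (hc : 0 < c) (ha : c ∣ a) (hb : c ∣ b)
    (hab : a * b ∣ c * m) : m = c * m / (a * b) * (a / c) * (b / c) * c := by
  obtain ⟨a', rfl⟩ := ha
  obtain ⟨b', rfl⟩ := hb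
  obtain ⟨k, hk⟩ := hab
  have hm : m = k * a' * b' * c := Nat.eq_of_mul_eq_mul_left hc (by rw [hk]; ring)
  rw [Nat.mul_div_cancel_left _ hc, Nat.mul_div_cancel_left _ hc]
  rcases Nat.eq_zero_or_pos a' with rfl | ha'
  · simp [hm]
  rcases Nat.eq_zero_or_pos b' with rfl | hb'
  · simp [hm]
  rw [hk, Nat.mul_div_cancel_left _ (by positivity), ← hm]

theorem twin_prime_factorization_general (p q n : ℕ) (hq2 : q = p + 2) (hodd : Odd p) (hn : n = p * q) :
    ((4 ^ p + 1) * (4 ^ q + 1)) ∣ 5 * (4 ^ n + 1) ∧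
    0 < 5 * (4 ^ n + 1) / ((4 ^ p + 1) * (4 ^ q + 1)) ∧
    4 ^ n + 1 =
      (5 * (4 ^ n + 1) / ((4 ^ p + 1) * (4 ^ q + 1))) * ((4 ^ p + 1) / 5) *
        ((4 ^ q + 1) / 5) * 5 := by
  have hoddq : Odd q := hq2 ▸ hodd.add_even even_two
  have hdvd : (4 ^ p + 1) * (4 ^ q + 1) ∣ 5 * (4 ^ n + 1) := by
    have hpn : 4 ^ p + 1 ∣ 4 ^ n + 1 := hn ▸ pow_add_one_dvd_pow_mul_add_one 4 p hoddq
    have hqn : 4 ^ q + 1 ∣ 4 ^ n + 1 :=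
      hn ▸ mul_comm q p ▸ pow_add_one_dvd_pow_mul_add_one 4 q hodd
    simpa only [hq2, gcd_four_pow_add_one_four_pow_add_two_add_one hodd] using
      Nat.mul_dvd_gcd_mul_of_dvd hpn hqn
  refine ⟨hdvd, Nat.div_pos (Nat.le_of_dvd (by positivity) hdvd) (by positivity), ?_⟩
  exact Nat.eq_div_mul_div_mul_div_mul (by norm_num) (five_dvd_four_pow_add_one hodd)
    (five_dvd_four_pow_add_one hoddq) hdvd

theorem twin_prime_factorization (p q n : ℕ) (hp : p.Prime) (hq : q.Prime)
    (hq2 : q = p + 2) (hodd : Odd p) (hn : n = p * q) :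
    ((4 ^ p + 1) * (4 ^ q + 1)) ∣ 5 * (4 ^ n + 1) ∧
    0 < 5 * (4 ^ n + 1) / ((4 ^ p + 1) * (4 ^ q + 1)) ∧
    4 ^ n + 1 =
      (5 * (4 ^ n + 1) / ((4 ^ p + 1) * (4 ^ q + 1))) * ((4 ^ p + 1) / 5) *
        ((4 ^ q + 1) / 5) * 5 :=
  twin_prime_factorization_general p q n hq2 hodd hn
end

section
/- Let n be odd, and let a, b : ZMod n → {0,1} with s(λ) = (-1)^(a(λ)), t(λ) = (-1)^(b(λ)). Define the quaternary interleaved sequence w of period 2n by the Gray map construction: w_i = φ(c_i, d_i) where for i ≡ (μ, λ) under Z_{2n} ≅ Z_2 × Z_n, c_i = a(λ(1-n)/2), d_i = b(λ(1-n)/2) if μ=0 and d_i = 1 - b(λ(1-n)/2) if μ=1, with φ(0,0)=0, φ(0,1)=1, φ(1,1)=2, φ(1,0)=3. Then W(4) = ∑_{i=0}^{2n-1} w_i 4^i satisfies W(4) ≡ -∑_{λ=0}^{n-1} s(λ)t(λ) 4^(2λ) (mod 4^n + 1) and W(4) ≡ -2∑_{λ=0}^{n-1} s(λ) 4^(2λ)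 (mod 4^n - 1). -/
/-!
Write `W = ∑ₗ (P l * 4 ^ (2l) + Q (m + l) * 4 ^ (2l + 1))` with `P λ = φ(a λ, b λ)`,
`Q λ = φ(a λ, 1 - b λ)` and `m = (n + 1) / 2`. Modulo `4 ^ n ∓ 1` we have `4 ^ n ≡ ε = ∓1`, and
`2m = n + 1` makes the odd weight `4 ^ (2l + 1)` equal to `ε * 16 ^ (m + l)`; since `16 ^ n ≡ 1`,
shifting the index by `m` in `ZMod n` turns the odd half into `ε * ∑ Q l * 16 ^ l`. The Gray map
gives `P - Q = -(-1)^a (-1)^b` and `P + Q = 3 - 2 (-1)^a`; the leftover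
`3 * ∑ 16 ^ l = (16 ^ n - 1) / 5` is divisible by `4 ^ n - 1` because `5 ∣ 4 ^ n + 1` for odd `n`.
-/

open Finset Function

theorem Finset.sum_range_two_mul {M : Type*} [AddCommMonoid M] (f : ℕ → M) (N : ℕ) :
    ∑ i ∈ range (2 * N), f i = ∑ j ∈ range N, (f (2 * j) + f (2 * j + 1)) := by
  induction N with
  | zero => simp
  | succ N ih => rw [mul_add_one, sum_range_succ, sum_range_succ, sum_range_succ, ih, add_assoc]

theorem Function.Periodic.sum_range_add {M : Type*} [AddCommMonoid M] {g : ℕ → M} {n : ℕ}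
    (hg : Periodic g n) (m : ℕ) : ∑ l ∈ range n, g (m + l) = ∑ l ∈ range n, g l := by
  induction m with
  | zero => simp
  | succ m ih =>
    rw [← ih]
    cases n with
    | zero => simp
    | succ k =>
      rw [sum_range_succ, sum_range_succ', add_zero, add_right_comm m 1, add_assoc m k, hg m]
      simp only [add_assoc, add_comm 1]

theorem Int.modEq_iff_intCast_zmod_eq {M a b : ℤ} :
    a ≡ b [ZMOD M] ↔ (a : ZMod M.natAbs) = b := by
  rw [Int.modEq_iff_dvd, ZMod.intCast_eq_intCast_iff_dvd_sub, Int.natAbs_dvd]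

section CommRing

variable {R : Type*} [CommRing R] {n : ℕ}

theorem periodic_mul_pow_of_pow_eq_one {y : R} (hy : y ^ n = 1) (F : ZMod n → R) :
    Periodic (fun l : ℕ => F l * y ^ l) n := fun l => by
  simp [pow_add, hy]

theorem sum_interleaved_pow_eq {x ε : R} (hx : x ^ n = ε) (hε : ε ^ 2 = 1) {m : ℕ}
    (hm : 2 * m = n + 1) (P Q : ZMod n → R) :
    ∑ l ∈ range n, (P l * x ^ (2 * l) + Q ((m + l : ℕ) : ZMod n) * x ^ (2 * l + 1)) =
      ∑ l ∈ range n, (P l + ε * Q l) * x ^ (2 * l) := by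
  have hodd (l : ℕ) : x ^ (2 * l + 1) = ε * (x ^ 2) ^ (m + l) := by
    rw [← pow_mul, show 2 * (m + l) = n + (2 * l + 1) by omega, pow_add x n, hx, ← mul_assoc,
      ← sq, hε, one_mul]
  have hy : (x ^ 2) ^ n = 1 := by rw [← pow_mul, mul_comm, pow_mul, hx, hε]
  have hshift := (periodic_mul_pow_of_pow_eq_one hy Q).sum_range_add m
  simp only [hodd, sum_add_distrib, add_mul, mul_left_comm _ ε, ← mul_sum, hshift, pow_mul,
    mul_assoc]

end CommRing

theorem sum_interleaved_pow_modEq {n m : ℕ} (hm : 2 * m = n + 1) {x ε M : ℤ}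
    (hx : x ^ n ≡ ε [ZMOD M]) (hε : ε ^ 2 = 1) (P Q : ZMod n → ℤ) :
    ∑ l ∈ range n, (P l * x ^ (2 * l) + Q ((m + l : ℕ) : ZMod n) * x ^ (2 * l + 1)) ≡
      ∑ l ∈ range n, (P l + ε * Q l) * x ^ (2 * l) [ZMOD M] := by
  rw [Int.modEq_iff_intCast_zmod_eq] at hx ⊢
  simp only [Int.cast_sum, Int.cast_add, Int.cast_mul, Int.cast_pow] at hx ⊢
  exact sum_interleaved_pow_eq hx (by rw [← Int.cast_pow, hε, Int.cast_one]) hm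
    (fun k => (P k : ZMod M.natAbs)) (fun k => (Q k : ZMod M.natAbs))

theorem pow_sub_one_dvd_sub_one_mul_sum_pow_two_mul {R : Type*} [CommRing R] [IsDomain R]
    {x : R} (hx : x + 1 ≠ 0) {n : ℕ} (hn : Odd n) :
    x ^ n - 1 ∣ (x - 1) * ∑ l ∈ range n, x ^ (2 * l) := by
  obtain ⟨k, hk⟩ := hn.add_dvd_pow_add_pow x 1
  refine ⟨k, mul_left_cancel₀ hx ?_⟩
  have hgeom := geom_sum_mul (x ^ 2) n
  simp only [one_pow, ← pow_mul] at hk hgeom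
  linear_combination hgeom + (x ^ n - 1) * hk

theorem gray_sub_gray_flip (φ : ℕ → ℕ → ℕ)
    (hφ : φ 0 0 = 0 ∧ φ 0 1 = 1 ∧ φ 1 1 = 2 ∧ φ 1 0 = 3) {a b : ℕ}
    (ha : a = 0 ∨ a = 1) (hb : b = 0 ∨ b = 1) :
    (φ a b : ℤ) - φ a (1 - b) = -((-1) ^ a * (-1) ^ b) := by
  obtain ⟨h00, h01, h11, h10⟩ := hφ
  rcases ha with rfl | rfl <;> rcases hb with rfl | rfl <;> simp [h00, h01, h11, h10]

theorem gray_add_gray_flip (φ : ℕ → ℕ → ℕ)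
    (hφ : φ 0 0 = 0 ∧ φ 0 1 = 1 ∧ φ 1 1 = 2 ∧ φ 1 0 = 3) {a b : ℕ}
    (ha : a = 0 ∨ a = 1) (hb : b = 0 ∨ b = 1) :
    (φ a b : ℤ) + φ a (1 - b) = 3 - 2 * (-1) ^ a := by
  obtain ⟨h00, h01, h11, h10⟩ := hφ
  rcases ha with rfl | rfl <;> rcases hb with rfl | rfl <;> simp [h00, h01, h11, h10]

theorem interleaved_W_mod_general (n : ℕ) (hn : Odd n)
    (a b : ZMod n → ℕ) (ha : ∀ x, a x = 0 ∨ a x = 1) (hb : ∀ x, b x = 0 ∨ b x = 1)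
    (c : ℕ → ℕ)
    (hc : ∀ i, c i = if i % 2 = 0 then a ((i / 2 : ℕ) : ZMod n)
      else a ((((n + 1) / 2 + (i - 1) / 2 : ℕ)) : ZMod n))
    (d : ℕ → ℕ)
    (hd : ∀ i, d i = if i % 2 = 0 then b ((i / 2 : ℕ) : ZMod n)
      else 1 - b ((((n + 1) / 2 + (i - 1) / 2 : ℕ)) : ZMod n))
    (φ : ℕ → ℕ → ℕ)
    (hφ : φ 0 0 = 0 ∧ φ 0 1 = 1 ∧ φ 1 1 = 2 ∧ φ 1 0 = 3)
    (w : ℕ → ℕ) (hw : ∀ i, w i = φ (c i) (d i))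
    (s t : ZMod n → ℤ) (hst : ∀ x, s x = (-1) ^ a x ∧ t x = (-1) ^ b x)
    (W : ℤ) (hW : W = ∑ i ∈ Finset.range (2 * n), (w i : ℤ) * 4 ^ i) :
    W ≡ -∑ l ∈ Finset.range n, s (l : ZMod n) * t (l : ZMod n) * 4 ^ (2 * l)
        [ZMOD (4 ^ n + 1)] ∧
    W ≡ -2 * ∑ l ∈ Finset.range n, s (l : ZMod n) * 4 ^ (2 * l)
        [ZMOD (4 ^ n - 1)] := by
  set P : ZMod n → ℤ := fun k => φ (a k) (b k)
  set Q : ZMod n → ℤ := fun k => φ (a k) (1 - b k)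
  have hm : 2 * ((n + 1) / 2) = n + 1 := by obtain ⟨k, rfl⟩ := hn; omega
  have hWPQ : W = ∑ l ∈ range n,
      (P l * 4 ^ (2 * l) + Q (((n + 1) / 2 + l : ℕ) : ZMod n) * 4 ^ (2 * l + 1)) := by
    rw [hW, sum_range_two_mul]
    refine sum_congr rfl fun l _ => ?_
    simp [P, Q, hw, hc, hd, Nat.add_mod]
  rw [hWPQ]
  constructor
  · calc _ ≡ ∑ l ∈ range n, (P l + -1 * Q l) * 4 ^ (2 * l) [ZMOD 4 ^ n + 1] :=
          sum_interleaved_pow_modEq hm (Int.modEq_iff_dvd.2 ⟨-1, by ring⟩) (by norm_num) P Q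
      _ = _ := by
        rw [← sum_neg_distrib]
        refine sum_congr rfl fun l _ => ?_
        rw [(hst l).1, (hst l).2]
        linear_combination 4 ^ (2 * l) * gray_sub_gray_flip φ hφ (ha l) (hb l)
  · calc _ ≡ ∑ l ∈ range n, (P l + 1 * Q l) * 4 ^ (2 * l) [ZMOD 4 ^ n - 1] :=
          sum_interleaved_pow_modEq hm (Int.modEq_iff_dvd.2 ⟨-1, by ring⟩) (by norm_num) P Q
      _ = -2 * ∑ l ∈ range n, s l * 4 ^ (2 * l) + (4 - 1) * ∑ l ∈ range n, 4 ^ (2 * l) := by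
        rw [mul_sum, mul_sum, ← sum_add_distrib]
        refine sum_congr rfl fun l _ => ?_
        rw [(hst l).1]
        linear_combination 4 ^ (2 * l) * gray_add_gray_flip φ hφ (ha l) (hb l)
      _ ≡ -2 * ∑ l ∈ range n, s l * 4 ^ (2 * l) + 0 [ZMOD 4 ^ n - 1] :=
        (Int.modEq_zero_iff_dvd.2 <|
          pow_sub_one_dvd_sub_one_mul_sum_pow_two_mul (by norm_num) hn).add_left _
      _ = _ := add_zero _

theorem interleaved_W_mod (n : ℕ) (hn : Odd n) (hn3 : 3 ≤ n)
    (a b : ZMod n → ℕ) (ha : ∀ x, a x = 0 ∨ a x = 1) (hb : ∀ x, b x = 0 ∨ b x = 1)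
    (c : ℕ → ℕ)
    (hc : ∀ i, c i = if i % 2 = 0 then a ((i / 2 : ℕ) : ZMod n)
      else a ((((n + 1) / 2 + (i - 1) / 2 : ℕ)) : ZMod n))
    (d : ℕ → ℕ)
    (hd : ∀ i, d i = if i % 2 = 0 then b ((i / 2 : ℕ) : ZMod n)
      else 1 - b ((((n + 1) / 2 + (i - 1) / 2 : ℕ)) : ZMod n))
    (φ : ℕ → ℕ → ℕ)
    (hφ : φ 0 0 = 0 ∧ φ 0 1 = 1 ∧ φ 1 1 = 2 ∧ φ 1 0 = 3)
    (w : ℕ → ℕ) (hw : ∀ i, w i = φ (c i) (d i))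
    (s t : ZMod n → ℤ) (hst : ∀ x, s x = (-1) ^ a x ∧ t x = (-1) ^ b x)
    (W : ℤ) (hW : W = ∑ i ∈ Finset.range (2 * n), (w i : ℤ) * 4 ^ i) :
    W ≡ -∑ l ∈ Finset.range n, s (l : ZMod n) * t (l : ZMod n) * 4 ^ (2 * l)
        [ZMOD (4 ^ n + 1)] ∧
    W ≡ -2 * ∑ l ∈ Finset.range n, s (l : ZMod n) * 4 ^ (2 * l)
        [ZMOD (4 ^ n - 1)] :=
  interleaved_W_mod_general n hn a b ha hb c hc d hd φ hφ w hw s t hst W hW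
end
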